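/- arXiv:1006.5385 — 3 statements merged into one kernel-verified Lean document; each statement's English description precedes it below -/
import Mathlib

section
/- Let n ≥ 1, let I ⊆ {1,…,n}×{1,…,n} be a set of index pairs, and let Σ̄ ∈ ℝ^{n×n} be invertible. Then the following are equivalent: (a) the inverse of Σ̄ vanishes at all transposed unspecified positions, i.e. (Σ̄⁻¹)_{ji} = 0 for every (i,j) ∈ I; (b) Σ̄ is a critical point of the determinant along the affine set of completions, i.e. for every matrix δΣ ∈ ℝ^{n×n} whose entries vanish outside I (that is, (δΣ)_{ij} = 0 whenever (i,j) ∉ I), the derivative at t = 0 of the function t ↦ det(Σ̄ + t·δΣ) is zero. -/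
/-!
Jacobi's formula: at an invertible `A`, the derivative of `t ↦ det (A + t • B)` at `0` is
`det A * trace (A⁻¹ * B)`. Since `det A ≠ 0`, criticality along every direction supported on `I`
says that `B ↦ trace (A⁻¹ * B)` vanishes on those directions, and testing against the matrix units
`single i j 1`, for which `trace (A⁻¹ * single i j 1) = A⁻¹ j i`, shows this is exactly the
vanishing of `A⁻¹` on the transposed positions.
-/

open Matrix Polynomial

namespace Matrix

variable {n : Type*} [Fintype n] [DecidableEq n]

theorem eval_det_one_add_X_smul {R : Type*} [CommRing R] (M : Matrix n n R) (t : R) :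
    (det (1 + (X : R[X]) • M.map C)).eval t = det (1 + t • M) := by
  rw [← coe_evalRingHom, RingHom.map_det]
  congr 1
  ext a b
  by_cases hab : a = b <;> simp [hab, mul_comm t]

theorem hasDerivAt_det_add_smul {𝕜 : Type*} [NontriviallyNormedField 𝕜] {A : Matrix n n 𝕜}
    (hA : IsUnit A.det) (B : Matrix n n 𝕜) :
    HasDerivAt (fun t : 𝕜 => (A + t • B).det) (A.det * (A⁻¹ * B).trace) 0 := by
  set p : 𝕜[X] := det (1 + (X : 𝕜[X]) • (A⁻¹ * B).map C)
  have hfactor : ∀ t : 𝕜, A + t • B = A * (1 + t • (A⁻¹ * B)) := fun t => by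
    rw [mul_add, mul_one, Matrix.mul_smul, ← Matrix.mul_assoc, mul_nonsing_inv A hA,
      Matrix.one_mul]
  have heval : (fun t : 𝕜 => (A + t • B).det) = fun t => A.det * p.eval t := by
    ext t
    rw [hfactor, det_mul, eval_det_one_add_X_smul]
  rw [heval, ← derivative_det_one_add_X_smul]
  exact (p.hasDerivAt 0).const_mul A.det

theorem forall_trace_mul_eq_zero_iff {R : Type*} [CommSemiring R] (M : Matrix n n R)
    (I : Set (n × n)) :
    (∀ B : Matrix n n R, (∀ i j, (i, j) ∉ I → B i j = 0) → (M * B).trace = 0) ↔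
      ∀ i j, (i, j) ∈ I → M j i = 0 := by
  constructor
  · intro h i j hij
    have hsupp : ∀ a b, (a, b) ∉ I → single i j (1 : R) a b = 0 := by
      rintro a b hab
      exact single_apply_of_ne _ _ _ _ _ (by rintro ⟨rfl, rfl⟩; exact hab hij)
    simpa [trace_mul_single] using h _ hsupp
  · intro h B hB
    refine Finset.sum_eq_zero fun i _ => Finset.sum_eq_zero fun j _ => ?_
    show M i j * B j i = 0
    by_cases hji : (j, i) ∈ I
    · rw [h j i hji, zero_mul]
    · rw [hB j i hji, mul_zero]

end Matrix

theorem main_square_general (n : ℕ) (I : Set (Fin n × Fin n))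
    (Sig : Matrix (Fin n) (Fin n) ℝ) (hSig : IsUnit Sig.det) :
    (∀ i j, (i, j) ∈ I → Sig⁻¹ j i = 0) ↔
      (∀ dS : Matrix (Fin n) (Fin n) ℝ,
        (∀ i j, (i, j) ∉ I → dS i j = 0) →
        deriv (fun t : ℝ => (Sig + t • dS).det) 0 = 0) := by
  simp_rw [fun dS => (hasDerivAt_det_add_smul hSig dS).deriv, mul_eq_zero, hSig.ne_zero,
    false_or]
  exact (forall_trace_mul_eq_zero_iff Sig⁻¹ I).symm

/-- **Main theorem (square case).** For an invertible completion `Sig` of a partial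
matrix with unspecified positions `I`, the inverse vanishes at all transposed
unspecified positions iff `Sig` is a critical point of the determinant along the
affine set of completions. -/
theorem main_square (n : ℕ) (hn : 1 ≤ n) (I : Set (Fin n × Fin n))
    (Sig : Matrix (Fin n) (Fin n) ℝ) (hSig : IsUnit Sig.det) :
    (∀ i j, (i, j) ∈ I → Sig⁻¹ j i = 0) ↔
      (∀ dS : Matrix (Fin n) (Fin n) ℝ,
        (∀ i j, (i, j) ∉ I → dS i j = 0) →
        deriv (fun t : ℝ => (Sig + t • dS).det) 0 = 0) :=
  main_square_general n I Sig hSig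
end

section
/- Let n ≤ p, let I ⊆ {1,…,n}×{1,…,p} be a set of index pairs, and let Σ̄ ∈ ℝ^{n×p} have full row rank n, with pseudo-inverse Σ̄^♯ = Σ̄ᵀ·(Σ̄·Σ̄ᵀ)⁻¹ ∈ ℝ^{p×n}. Then the following are equivalent: (a) (Σ̄^♯)_{ji} = 0 for every (i,j) ∈ I; (b) for every matrix δΣ ∈ ℝ^{n×p} whose entries vanish outside I, the derivative at t = 0 of the function t ↦ log det(((Σ̄ + t·δΣ)·(Σ̄ + t·δΣ)ᵀ)^{1/2}) is zero. -/
/-! Since `det (M^{1/2}) = √(det M)` for positive semidefinite `M`, the objective is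
`½ log det ((Σ + t δ)(Σ + t δ)ᵀ)`. Jacobi's formula `d/dt det (A + t E + t² F) = det A · tr (A⁻¹ E)`
at `t = 0`, read off the coefficient of `X` in a polynomial determinant, together with the symmetry
of `(Σ Σᵀ)⁻¹` turns its derivative into the pairing `tr (Σ♯ δ)`. This pairing vanishes for every `δ`
supported on `I` exactly when `Σ♯` vanishes on the transpose of `I`, as the matrix units show. -/

open Matrix

/-- The positive semidefinite square root of a positive semidefinite real matrix
(and junk value `0` otherwise); for a positive definite `A` this is the unique
symmetric positive definite square root `A^{1/2}`. -/
noncomputable def matSqrt {n : ℕ} (A : Matrix (Fin n) (Fin n) ℝ) :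
    Matrix (Fin n) (Fin n) ℝ :=
  open Classical in
  if h : A.PosSemidef then
    (h.1.eigenvectorUnitary : Matrix (Fin n) (Fin n) ℝ) *
      diagonal (Real.sqrt ∘ h.1.eigenvalues) *
      (star h.1.eigenvectorUnitary : Matrix (Fin n) (Fin n) ℝ)
  else 0

open Polynomial

variable {m k : Type*}

lemma det_matSqrt {n : ℕ} {A : Matrix (Fin n) (Fin n) ℝ} (hA : A.PosSemidef) :
    (matSqrt A).det = √A.det := by
  have hU : (hA.1.eigenvectorUnitary : Matrix (Fin n) (Fin n) ℝ).det *
      (star hA.1.eigenvectorUnitary : Matrix (Fin n) (Fin n) ℝ).det = 1 := by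
    rw [← det_mul]; simp
  rw [matSqrt, dif_pos hA, det_mul, det_mul, det_diagonal, hA.1.det_eq_prod_eigenvalues,
    Real.sqrt_prod _ fun i _ => by simpa using hA.eigenvalues_nonneg i]
  simp only [Function.comp_apply, RCLike.ofReal_real_eq_id, id]
  linear_combination (∏ i, √(hA.1.eigenvalues i)) * hU

lemma log_det_matSqrt_mul_transpose_self {n p : ℕ} (S : Matrix (Fin n) (Fin p) ℝ) :
    Real.log (matSqrt (S * Sᵀ)).det = Real.log (S * Sᵀ).det / 2 := by
  have hS : (S * Sᵀ).PosSemidef := by simpa using posSemidef_self_mul_conjTranspose S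
  rw [det_matSqrt hS, Real.log_sqrt hS.det_nonneg]

lemma isUnit_of_rank_eq_card [Fintype m] [DecidableEq m] {K : Type*} [Field K]
    {A : Matrix m m K} (h : A.rank = Fintype.card m) : IsUnit A := by
  rw [← mulVec_surjective_iff_isUnit]
  refine (LinearMap.range_eq_top (f := A.mulVecLin)).mp (Submodule.eq_top_of_finrank_eq ?_)
  rw [← rank, h, Module.finrank_fintype_fun_eq_card]

section Jacobi

variable [Fintype m] [DecidableEq m] {R : Type*} [CommRing R]

lemma coeff_one_det_add_X_sq_smul (M F : Matrix m m R[X]) :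
    (det (M + (X ^ 2 : R[X]) • F)).coeff 1 = (det M).coeff 1 := by
  have hdvd : (X ^ 2 : R[X]) ∣ det (M + (X ^ 2 : R[X]) • F) - det M := by
    rw [← Ideal.mem_span_singleton, ← Ideal.Quotient.eq, RingHom.map_det, RingHom.map_det]
    congr 1
    ext i j
    simp [Ideal.Quotient.eq_zero_iff_mem.mpr (Ideal.mem_span_singleton_self _)]
  obtain ⟨c, hc⟩ := hdvd
  have hc₁ := congrArg (coeff · 1) hc
  simp only [coeff_sub, mul_comm _ c, coeff_mul_X_pow', show ¬ 2 ≤ 1 by omega, if_false] at hc₁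
  exact sub_eq_zero.mp hc₁

lemma coeff_one_det_map_C_add_X_smul {A : Matrix m m R} (hA : IsUnit A.det) (E : Matrix m m R) :
    (det (A.map C + (X : R[X]) • E.map C)).coeff 1 = A.det * trace (A⁻¹ * E) := by
  have hfac : A.map C + (X : R[X]) • E.map C = A.map C * (1 + (X : R[X]) • (A⁻¹ * E).map C) := by
    rw [mul_add, mul_one, Matrix.mul_smul, ← Matrix.map_mul, mul_nonsing_inv_cancel_left _ _ hA]
  rw [hfac, det_mul, ← RingHom.mapMatrix_apply, ← RingHom.map_det, coeff_C_mul,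
    coeff_det_one_add_X_smul_one]

end Jacobi

theorem hasDerivAt_det_add_smul_add_sq_smul [Fintype m] [DecidableEq m] {𝕜 : Type*}
    [NontriviallyNormedField 𝕜] {A : Matrix m m 𝕜} (hA : IsUnit A.det) (E F : Matrix m m 𝕜) :
    HasDerivAt (fun t : 𝕜 => det (A + t • E + t ^ 2 • F)) (A.det * trace (A⁻¹ * E)) 0 := by
  set P : 𝕜[X] := det (A.map C + (X : 𝕜[X]) • E.map C + (X ^ 2 : 𝕜[X]) • F.map C)
  have hP : ∀ t, P.eval t = det (A + t • E + t ^ 2 • F) := fun t => by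
    rw [← coe_evalRingHom, RingHom.map_det]
    congr 1
    ext i j
    simp only [RingHom.mapMatrix_apply, map_apply, Matrix.add_apply, Matrix.smul_apply,
      smul_eq_mul, coe_evalRingHom, eval_add, eval_mul, eval_pow, eval_X, eval_C]
  have hP' : P.derivative.eval 0 = A.det * trace (A⁻¹ * E) := by
    rw [← coeff_zero_eq_eval_zero, coeff_derivative, zero_add, Nat.cast_zero, zero_add, mul_one,
      coeff_one_det_add_X_sq_smul, coeff_one_det_map_C_add_X_smul hA]
  simpa only [hP, hP'] using P.hasDerivAt 0

lemma mul_transpose_add_smul [Fintype k] {R : Type*} [CommRing R] (S D : Matrix m k R) (t : R) :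
    (S + t • D) * (S + t • D)ᵀ = S * Sᵀ + t • (S * Dᵀ + D * Sᵀ) + t ^ 2 • (D * Dᵀ) := by
  simp only [transpose_add, transpose_smul, Matrix.add_mul, Matrix.mul_add, Matrix.smul_mul,
    Matrix.mul_smul, smul_add, smul_smul, pow_two]
  abel

lemma trace_inv_mul_transpose_add [Fintype m] [DecidableEq m] [Fintype k] {R : Type*} [CommRing R]
    (S D : Matrix m k R) :
    trace ((S * Sᵀ)⁻¹ * (S * Dᵀ + D * Sᵀ)) = 2 * trace (Sᵀ * (S * Sᵀ)⁻¹ * D) := by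
  have hsymm : ((S * Sᵀ)⁻¹)ᵀ = (S * Sᵀ)⁻¹ := by
    rw [transpose_nonsing_inv, transpose_mul, transpose_transpose]
  have h₁ : trace ((S * Sᵀ)⁻¹ * (S * Dᵀ)) = trace (Sᵀ * (S * Sᵀ)⁻¹ * D) := by
    rw [← trace_transpose, transpose_mul, transpose_mul, transpose_transpose, hsymm,
      Matrix.mul_assoc, trace_mul_comm]
  have h₂ : trace ((S * Sᵀ)⁻¹ * (D * Sᵀ)) = trace (Sᵀ * (S * Sᵀ)⁻¹ * D) := by
    rw [← Matrix.mul_assoc, trace_mul_cycle]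
  rw [mul_add, trace_add, h₁, h₂, two_mul]

theorem hasDerivAt_log_det_matSqrt {n p : ℕ} {S : Matrix (Fin n) (Fin p) ℝ}
    (hS : IsUnit (S * Sᵀ).det) (D : Matrix (Fin n) (Fin p) ℝ) :
    HasDerivAt (fun t : ℝ => Real.log (matSqrt ((S + t • D) * (S + t • D)ᵀ)).det)
      (trace (Sᵀ * (S * Sᵀ)⁻¹ * D)) 0 := by
  simp_rw [log_det_matSqrt_mul_transpose_self, mul_transpose_add_smul]
  have hdet := hasDerivAt_det_add_smul_add_sq_smul hS (S * Dᵀ + D * Sᵀ) (D * Dᵀ)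
  refine ((hdet.log (by simpa using hS.ne_zero)).div_const 2).congr_deriv ?_
  simp only [zero_smul, add_zero, ne_eq, OfNat.ofNat_ne_zero, not_false_eq_true, zero_pow,
    trace_inv_mul_transpose_add]
  field_simp [hS.ne_zero]

lemma forall_mem_eq_zero_iff_trace_mul_eq_zero [Fintype m] [DecidableEq m] [Fintype k]
    [DecidableEq k] {R : Type*} [CommSemiring R] (G : Matrix k m R) (I : Set (m × k)) :
    (∀ i j, (i, j) ∈ I → G j i = 0) ↔
      ∀ D : Matrix m k R, (∀ i j, (i, j) ∉ I → D i j = 0) → trace (G * D) = 0 := by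
  refine ⟨fun hG D hD => ?_, fun h i j hij => ?_⟩
  · simp only [trace, diag, mul_apply]
    refine Finset.sum_eq_zero fun j _ => Finset.sum_eq_zero fun i _ => ?_
    by_cases hij : (i, j) ∈ I
    · rw [hG i j hij, zero_mul]
    · rw [hD i j hij, mul_zero]
  · have hsupp : ∀ i' j', (i', j') ∉ I → single i j (1 : R) i' j' = 0 := fun i' j' hne =>
      single_apply_of_ne _ _ _ _ _ (by rintro ⟨rfl, rfl⟩; exact hne hij)
    simpa [trace_mul_single] using h _ hsupp

theorem main_rectangular_general (n p : ℕ) (I : Set (Fin n × Fin p))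
    (Sig : Matrix (Fin n) (Fin p) ℝ) (hrank : Sig.rank = n) :
    (∀ i j, (i, j) ∈ I → (Sigᵀ * (Sig * Sigᵀ)⁻¹) j i = 0) ↔
      (∀ dS : Matrix (Fin n) (Fin p) ℝ,
        (∀ i j, (i, j) ∉ I → dS i j = 0) →
        deriv (fun t : ℝ =>
          Real.log (matSqrt ((Sig + t • dS) * (Sig + t • dS)ᵀ)).det) 0 = 0) := by
  have hS : IsUnit (Sig * Sigᵀ).det :=
    (isUnit_iff_isUnit_det _).mp (isUnit_of_rank_eq_card (by simpa using hrank))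
  simp only [fun dS => (hasDerivAt_log_det_matSqrt hS dS).deriv]
  exact forall_mem_eq_zero_iff_trace_mul_eq_zero _ I

/-- **Main theorem (rectangular case).** For a full-row-rank completion
`Sig ∈ ℝ^{n×p}` (`n ≤ p`) of a partial matrix with unspecified positions `I`, the
Moore–Penrose pseudo-inverse `Sig♯ = Sigᵀ (Sig Sigᵀ)⁻¹` vanishes at all
transposed unspecified positions iff `Sig` is a critical point of
`log det ((· ·ᵀ)^{1/2})` along the affine set of completions. -/
theorem main_rectangular (n p : ℕ) (hnp : n ≤ p) (I : Set (Fin n × Fin p))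
    (Sig : Matrix (Fin n) (Fin p) ℝ) (hrank : Sig.rank = n) :
    (∀ i j, (i, j) ∈ I → (Sigᵀ * (Sig * Sigᵀ)⁻¹) j i = 0) ↔
      (∀ dS : Matrix (Fin n) (Fin p) ℝ,
        (∀ i j, (i, j) ∉ I → dS i j = 0) →
        deriv (fun t : ℝ =>
          Real.log (matSqrt ((Sig + t • dS) * (Sig + t • dS)ᵀ)).det) 0 = 0) :=
  main_rectangular_general n p I Sig hrank
end

section
/- Let I ⊆ {1,…,n}×{1,…,n} be symmetric (i.e. (i,j) ∈ I implies (j,i) ∈ I). Let Σ° ∈ ℝ^{n×n} be symmetric positive definite with ((Σ°)⁻¹)_{ij} = 0 for every (i,j) ∈ I. Then for every symmetric positive definite Σ ∈ ℝ^{n×n} satisfying Σ_{ij} = Σ°_{ij} for all (i,j) ∉ I, one has det Σ ≤ det Σ°. -/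
/-!
Since `So⁻¹` vanishes on `I` and `S` agrees with `So` off `I` (`I` being symmetric),
`tr (So⁻¹ S) = tr (So⁻¹ So) = n`. With `R = So^{1/2}`, the matrix `M = R⁻¹ S R⁻¹` is positive
semidefinite with `det M = det S / det So` and `tr M = tr (So⁻¹ S) = n`, and for its eigenvalues
`λ ≤ exp (λ - 1)` gives `det M ≤ exp (tr M - n) = 1`.
-/

open Matrix
open scoped MatrixOrder

namespace Matrix

variable {ι : Type*} [Fintype ι]

theorem trace_mul_congr_of_support {α : Type*} [NonUnitalNonAssocSemiring α]
    {A B C : Matrix ι ι α} (h : ∀ i j, A i j ≠ 0 → B j i = C j i) :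
    (A * B).trace = (A * C).trace := by
  simp only [trace, diag_apply, mul_apply]
  refine Finset.sum_congr rfl fun i _ => Finset.sum_congr rfl fun j _ => ?_
  by_cases hij : A i j = 0
  · simp [hij]
  · rw [h i j hij]

variable [DecidableEq ι]

theorem PosSemidef.det_le_exp_trace_sub_card {M : Matrix ι ι ℝ} (hM : M.PosSemidef) :
    M.det ≤ Real.exp (M.trace - Fintype.card ι) := by
  have hHerm := hM.isHermitian
  have htrace : M.trace - Fintype.card ι = ∑ i, (hHerm.eigenvalues i - 1) := by
    simp [hHerm.trace_eq_sum_eigenvalues, Finset.sum_sub_distrib]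
  rw [hHerm.det_eq_prod_eigenvalues, htrace, Real.exp_sum]
  simp only [RCLike.ofReal_real_eq_id, id_eq]
  refine Finset.prod_le_prod (fun i _ => hM.eigenvalues_nonneg i) fun i _ => ?_
  linarith [Real.add_one_le_exp (hHerm.eigenvalues i - 1)]

theorem PosDef.det_le_det_mul_exp_trace_inv_mul_sub_card {A B : Matrix ι ι ℝ} (hA : A.PosDef)
    (hB : B.PosSemidef) : B.det ≤ A.det * Real.exp ((A⁻¹ * B).trace - Fintype.card ι) := by
  set R := CFC.sqrt A
  have hR : R.IsHermitian := (CFC.sqrt_nonneg A).posSemidef.isHermitian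
  have hRR : R * R = A := CFC.sqrt_mul_sqrt_self A hA.posSemidef.nonneg
  have hRunit : IsUnit R.det := by
    refine isUnit_iff_ne_zero.mpr fun h => hA.det_pos.ne' ?_
    rw [← hRR, det_mul, h, zero_mul]
  obtain ⟨M, hM_def⟩ : ∃ M, M = R⁻¹ * B * R⁻¹ := ⟨_, rfl⟩
  have hM : M.PosSemidef := by
    simpa only [hM_def, hR.inv.eq] using hB.mul_mul_conjTranspose_same R⁻¹
  have hB_eq : B = R * M * R := by
    simp only [hM_def, Matrix.mul_assoc, nonsing_inv_mul _ hRunit, Matrix.mul_one]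
    rw [← Matrix.mul_assoc, mul_nonsing_inv _ hRunit, Matrix.one_mul]
  have hdet : B.det = A.det * M.det := by
    rw [hB_eq, det_mul, det_mul, ← hRR, det_mul]
    ring
  have htrace : M.trace = (A⁻¹ * B).trace := by
    rw [hM_def, trace_mul_cycle, ← hRR, Matrix.mul_inv_rev]
  rw [hdet, ← htrace]
  exact mul_le_mul_of_nonneg_left hM.det_le_exp_trace_sub_card hA.det_pos.le

end Matrix

/-- **Dempster's maximum-determinant property.** Let `I` be a symmetric set of
unspecified positions and `So` a symmetric positive definite matrix whose
inverse vanishes at every position of `I` (the Dempster completion). Then every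
symmetric positive definite matrix agreeing with `So` outside `I` has
determinant at most `det So`. -/
theorem dempster_max_det (n : ℕ) (I : Set (Fin n × Fin n))
    (hI : ∀ i j, (i, j) ∈ I → (j, i) ∈ I)
    (So : Matrix (Fin n) (Fin n) ℝ) (hSo : So.PosDef)
    (hinv : ∀ i j, (i, j) ∈ I → So⁻¹ i j = 0) :
    ∀ S : Matrix (Fin n) (Fin n) ℝ, S.PosDef →
      (∀ i j, (i, j) ∉ I → S i j = So i j) → S.det ≤ So.det := by
  intro S hS hagree
  have htrace : (So⁻¹ * S).trace = n := by
    rw [trace_mul_congr_of_support (C := So) fun i j hij => hagree j i fun hji => hij <|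
      hinv i j (hI j i hji), nonsing_inv_mul _ hSo.det_pos.ne'.isUnit, trace_one, Fintype.card_fin]
  simpa [htrace] using hSo.det_le_det_mul_exp_trace_inv_mul_sub_card hS.posSemidef
end
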